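/- Let β ∈ [0, π/2) and let ρ : ℝ × ℝ → ℝ be a continuously differentiable function with ρ(θ,ψ) > 0 for all (θ,ψ). If ρ satisfies ρ_θ(θ,ψ)² + ρ_ψ(θ,ψ)² cos²ψ = ρ(θ,ψ)² cos²ψ · tan²β for all θ ∈ ℝ and ψ ∈ (−π/2, π/2), then the angle between N(θ,ψ) and X(θ,ψ) equals β for all θ ∈ ℝ and ψ ∈ (−π/2, π/2); that is, the surface is equiangular with characteristic angle β. -/

import Mathlib

open Real

/-- The surface map `X(θ,ψ) = ρ(θ,ψ)·(cos ψ cos θ, cos ψ sin θ, sin ψ)`. -/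
noncomputable def Xsurf (ρ : ℝ → ℝ → ℝ) (θ ψ : ℝ) : EuclideanSpace ℝ (Fin 3) :=
  WithLp.toLp 2 ![ρ θ ψ * Real.cos ψ * Real.cos θ, ρ θ ψ * Real.cos ψ * Real.sin θ, ρ θ ψ * Real.sin ψ]

/-- The normal vector `N = X_θ × X_ψ`. -/
noncomputable def Nsurf (ρ : ℝ → ℝ → ℝ) (θ ψ : ℝ) : EuclideanSpace ℝ (Fin 3) :=
  WithLp.toLp 2 (crossProduct (WithLp.ofLp (deriv (fun t => Xsurf ρ t ψ) θ))
    (WithLp.ofLp (deriv (fun s => Xsurf ρ θ s) ψ)))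

/-! With `a = ρ_θ` and `b = ρ_ψ`, a direct computation gives `⟪N, X⟫ = ρ³ cos ψ`, `‖X‖ = ρ` and
`‖N‖² = ρ² (a² + cos²ψ (b² + ρ²))`. The PDE together with `1 + tan²β = 1 / cos²β` turns the last
one into `‖N‖ = ρ² cos ψ / cos β`, so the cosine of the angle between `N` and `X` is `cos β`. -/

open InnerProductGeometry

section Partial

variable {𝕜 E F G : Type*} [NontriviallyNormedField 𝕜] [NormedAddCommGroup E] [NormedSpace 𝕜 E]
  [NormedAddCommGroup F] [NormedSpace 𝕜 F] [NormedAddCommGroup G] [NormedSpace 𝕜 G]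
  {f : E → F → G} {x : E} {y : F}

lemma DifferentiableAt.of_uncurry_left (hf : DifferentiableAt 𝕜 (Function.uncurry f) (x, y)) :
    DifferentiableAt 𝕜 (fun t => f t y) x :=
  hf.comp (f := fun t => (t, y)) x (differentiableAt_id.prodMk (differentiableAt_const y))

lemma DifferentiableAt.of_uncurry_right (hf : DifferentiableAt 𝕜 (Function.uncurry f) (x, y)) :
    DifferentiableAt 𝕜 (fun s => f x s) y :=
  hf.comp (f := fun s => (x, s)) y ((differentiableAt_const x).prodMk differentiableAt_id)

end Partial

lemma hasDerivAt_toLp_vec3 {f g h : ℝ → ℝ} {f' g' h' x : ℝ}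
    (hf : HasDerivAt f f' x) (hg : HasDerivAt g g' x) (hh : HasDerivAt h h' x) :
    HasDerivAt (fun t => (WithLp.toLp 2 ![f t, g t, h t] : EuclideanSpace ℝ (Fin 3)))
      (WithLp.toLp 2 ![f', g', h']) x := by
  refine (PiLp.continuousLinearEquiv 2 ℝ (fun _ : Fin 3 => ℝ)).symm.hasFDerivAt.comp_hasDerivAt
    x (hasDerivAt_pi.2 fun i => ?_)
  fin_cases i
  · simpa using hf
  · simpa using hg
  · simpa using hh

lemma inner_toLp_vec3 (x₀ x₁ x₂ y₀ y₁ y₂ : ℝ) :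
    inner ℝ (WithLp.toLp 2 ![x₀, x₁, x₂] : EuclideanSpace ℝ (Fin 3)) (WithLp.toLp 2 ![y₀, y₁, y₂])
      = x₀ * y₀ + x₁ * y₁ + x₂ * y₂ := by
  simp only [PiLp.inner_apply, RCLike.inner_apply, conj_trivial, Fin.sum_univ_three,
    Matrix.cons_val_zero, Matrix.cons_val_one, Matrix.cons_val_two, Matrix.head_cons,
    Matrix.tail_cons]
  ring

lemma InnerProductGeometry.angle_eq_of_inner_eq {V : Type*} [NormedAddCommGroup V]
    [InnerProductSpace ℝ V] {x y : V} {β : ℝ} (hx : x ≠ 0) (hy : y ≠ 0)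
    (hβ₀ : 0 ≤ β) (hβπ : β ≤ π) (h : inner ℝ x y = ‖x‖ * ‖y‖ * cos β) :
    angle x y = β := by
  have hxy : ‖x‖ * ‖y‖ ≠ 0 := mul_ne_zero (norm_ne_zero_iff.2 hx) (norm_ne_zero_iff.2 hy)
  rw [angle, h, mul_div_cancel_left₀ _ hxy, arccos_cos hβ₀ hβπ]

lemma norm_Xsurf (ρ : ℝ → ℝ → ℝ) (θ ψ : ℝ) : ‖Xsurf ρ θ ψ‖ = |ρ θ ψ| := by
  rw [← sqrt_sq (norm_nonneg _), ← real_inner_self_eq_norm_sq, ← sqrt_sq_eq_abs, Xsurf,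
    inner_toLp_vec3]
  congr 1
  linear_combination (ρ θ ψ ^ 2 * cos ψ ^ 2) * sin_sq_add_cos_sq θ +
    ρ θ ψ ^ 2 * sin_sq_add_cos_sq ψ

section Tangents

variable {ρ : ℝ → ℝ → ℝ} {θ ψ a b : ℝ}

lemma hasDerivAt_Xsurf_fst (ha : HasDerivAt (fun t => ρ t ψ) a θ) :
    HasDerivAt (fun t => Xsurf ρ t ψ)
      (WithLp.toLp 2 ![a * cos ψ * cos θ - ρ θ ψ * cos ψ * sin θ,
        a * cos ψ * sin θ + ρ θ ψ * cos ψ * cos θ, a * sin ψ]) θ := by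
  refine (hasDerivAt_toLp_vec3 ((ha.mul_const (cos ψ)).mul (hasDerivAt_cos θ))
    ((ha.mul_const (cos ψ)).mul (hasDerivAt_sin θ)) (ha.mul_const (sin ψ))).congr_deriv ?_
  ring_nf

lemma hasDerivAt_Xsurf_snd (hb : HasDerivAt (fun s => ρ θ s) b ψ) :
    HasDerivAt (fun s => Xsurf ρ θ s)
      (WithLp.toLp 2 ![(b * cos ψ - ρ θ ψ * sin ψ) * cos θ,
        (b * cos ψ - ρ θ ψ * sin ψ) * sin θ, b * sin ψ + ρ θ ψ * cos ψ]) ψ := by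
  refine (hasDerivAt_toLp_vec3 ((hb.mul (hasDerivAt_cos ψ)).mul_const (cos θ))
    ((hb.mul (hasDerivAt_cos ψ)).mul_const (sin θ)) (hb.mul (hasDerivAt_sin ψ))).congr_deriv ?_
  ring_nf

variable (ha : HasDerivAt (fun t => ρ t ψ) a θ) (hb : HasDerivAt (fun s => ρ θ s) b ψ)
include ha hb

lemma Nsurf_eq_of_hasDerivAt :
    Nsurf ρ θ ψ = WithLp.toLp 2
      ![ρ θ ψ * (a * sin θ + cos ψ * cos θ * (b * sin ψ + ρ θ ψ * cos ψ)),
        ρ θ ψ * (-(a * cos θ) + cos ψ * sin θ * (b * sin ψ + ρ θ ψ * cos ψ)),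
        ρ θ ψ * cos ψ * (ρ θ ψ * sin ψ - b * cos ψ)] := by
  rw [Nsurf, (hasDerivAt_Xsurf_fst ha).deriv, (hasDerivAt_Xsurf_snd hb).deriv,
    WithLp.ofLp_toLp, WithLp.ofLp_toLp, cross_apply]
  congr 1
  apply Matrix.vec3_eq <;> simp only [Matrix.cons_val_zero, Matrix.cons_val_one,
    Matrix.cons_val_two, Matrix.head_cons, Matrix.tail_cons]
  · linear_combination (a * ρ θ ψ * sin θ) * sin_sq_add_cos_sq ψ
  · linear_combination (-(a * ρ θ ψ * cos θ)) * sin_sq_add_cos_sq ψ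
  · linear_combination (ρ θ ψ ^ 2 * cos ψ * sin ψ - ρ θ ψ * b * cos ψ ^ 2) * sin_sq_add_cos_sq θ

lemma inner_Nsurf_Xsurf : inner ℝ (Nsurf ρ θ ψ) (Xsurf ρ θ ψ) = ρ θ ψ ^ 3 * cos ψ := by
  rw [Nsurf_eq_of_hasDerivAt ha hb, Xsurf, inner_toLp_vec3]
  linear_combination (ρ θ ψ ^ 2 * cos ψ ^ 2 * (b * sin ψ + ρ θ ψ * cos ψ)) * sin_sq_add_cos_sq θ
    + (ρ θ ψ ^ 3 * cos ψ) * sin_sq_add_cos_sq ψ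

lemma norm_Nsurf_sq :
    ‖Nsurf ρ θ ψ‖ ^ 2 = ρ θ ψ ^ 2 * (a ^ 2 + cos ψ ^ 2 * (b ^ 2 + ρ θ ψ ^ 2)) := by
  rw [← real_inner_self_eq_norm_sq, Nsurf_eq_of_hasDerivAt ha hb, inner_toLp_vec3]
  linear_combination (ρ θ ψ ^ 2 * (a ^ 2 + cos ψ ^ 2 * (b * sin ψ + ρ θ ψ * cos ψ) ^ 2)) *
      sin_sq_add_cos_sq θ + (ρ θ ψ ^ 2 * cos ψ ^ 2 * (b ^ 2 + ρ θ ψ ^ 2)) * sin_sq_add_cos_sq ψ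

end Tangents

/-- If a positive `C¹` polar radius `ρ` satisfies the PDE
`ρ_θ² + ρ_ψ² cos²ψ = ρ² cos²ψ tan²β` on the strip `ℝ × (−π/2, π/2)` with `β ∈ [0, π/2)`,
then the surface is equiangular there with characteristic angle `β`. -/
theorem pde_implies_equiangular (β : ℝ) (hβ : β ∈ Set.Ico 0 (π / 2))
    (ρ : ℝ → ℝ → ℝ) (hρC : ContDiff ℝ 1 (Function.uncurry ρ))
    (hρpos : ∀ θ ψ, 0 < ρ θ ψ)
    (hpde : ∀ θ : ℝ, ∀ ψ ∈ Set.Ioo (-(π / 2)) (π / 2),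
      (deriv (fun t => ρ t ψ) θ) ^ 2 + (deriv (fun s => ρ θ s) ψ) ^ 2 * Real.cos ψ ^ 2
        = (ρ θ ψ) ^ 2 * Real.cos ψ ^ 2 * Real.tan β ^ 2) :
    ∀ θ : ℝ, ∀ ψ ∈ Set.Ioo (-(π / 2)) (π / 2),
      InnerProductGeometry.angle (Nsurf ρ θ ψ) (Xsurf ρ θ ψ) = β := by
  obtain ⟨hβ₀, hβ₂⟩ := hβ
  intro θ ψ hψ
  have hρ := hρpos θ ψ
  have hcosψ : 0 < cos ψ := cos_pos_of_mem_Ioo hψ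
  have hcosβ : 0 < cos β := cos_pos_of_mem_Ioo ⟨by linarith [pi_pos], hβ₂⟩
  have hρd : DifferentiableAt ℝ (Function.uncurry ρ) (θ, ψ) := hρC.differentiable one_ne_zero _
  have ha := hρd.of_uncurry_left.hasDerivAt
  have hb := hρd.of_uncurry_right.hasDerivAt
  have hX : ‖Xsurf ρ θ ψ‖ = ρ θ ψ := by rw [norm_Xsurf, abs_of_pos hρ]
  have hN : ‖Nsurf ρ θ ψ‖ = ρ θ ψ ^ 2 * cos ψ / cos β := by
    rw [← sq_eq_sq₀ (norm_nonneg _) (by positivity)]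
    calc ‖Nsurf ρ θ ψ‖ ^ 2 = (ρ θ ψ ^ 2 * cos ψ) ^ 2 * (1 + tan β ^ 2) := by
          linear_combination norm_Nsurf_sq ha hb + ρ θ ψ ^ 2 * hpde θ ψ hψ
      _ = (ρ θ ψ ^ 2 * cos ψ / cos β) ^ 2 := by
          rw [← inv_inv (1 + tan β ^ 2), inv_one_add_tan_sq hcosβ.ne']
          field_simp
  refine angle_eq_of_inner_eq (norm_pos_iff.1 (hN ▸ by positivity)) (norm_pos_iff.1 (hX ▸ hρ))
    hβ₀ (by linarith [pi_pos]) ?_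
  rw [inner_Nsurf_Xsurf ha hb, hN, hX]
  field_simp
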